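/- Let Λ be a k-graph, Γ an l-graph, π : ℕ^k → ℕ^l a monoid homomorphism, and extend π to the linear map π̃ : ℝ^k → ℝ^l with π̃(t) = Σ_{i=1}^k t_i π(e_i). If φ : Λ → Γ is a π-quasimorphism, then there is a well-defined continuous map φ̃ : X_Λ → X_Γ given by φ̃([λ,t]) = [φ(λ), π̃(t)]. Moreover, if π' : ℕ^l → ℕ^h is another homomorphism, Σ an h-graph and φ' : Γ → Σ a π'-quasimorphism, then φ' ∘ φ is a (π' ∘ π)-quasimorphism and (φ' ∘ φ)~ = φ̃' ∘ φ̃. -/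

import Mathlib

/-- A `k`-graph: a countable small category (objects identified with the
identity morphisms, i.e. the morphisms of degree `0`) equipped with a degree
functor `d : Λ → ℕᵏ` satisfying the unique factorization property. -/
structure KGraph (k : ℕ) where
  /-- The morphisms of the category. -/
  Mor : Type
  /-- The category is countable. -/
  countable : Countable Mor
  /-- The source (domain) of a morphism, viewed as a degree-zero morphism. -/
  src : Mor → Mor
  /-- The range (codomain) of a morphism, viewed as a degree-zero morphism. -/
  rng : Mor → Mor
  /-- Composition `comp a b = a ∘ b`, meaningful when `src a = rng b`. -/
  comp : Mor → Mor → Mor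
  /-- The degree functor. -/
  deg : Mor → Fin k → ℕ
  src_src : ∀ a, src (src a) = src a
  rng_src : ∀ a, rng (src a) = src a
  src_rng : ∀ a, src (rng a) = rng a
  rng_rng : ∀ a, rng (rng a) = rng a
  deg_src : ∀ a, deg (src a) = 0
  deg_rng : ∀ a, deg (rng a) = 0
  src_comp : ∀ a b, src a = rng b → src (comp a b) = src b
  rng_comp : ∀ a b, src a = rng b → rng (comp a b) = rng a
  comp_assoc : ∀ a b c, src a = rng b → src b = rng c →
    comp (comp a b) c = comp a (comp b c)
  id_comp : ∀ a, comp (rng a) a = a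
  comp_id : ∀ a, comp a (src a) = a
  deg_comp : ∀ a b, src a = rng b → deg (comp a b) = deg a + deg b
  /-- The unique factorization property. -/
  factor : ∀ (a : Mor) (m n : Fin k → ℕ), deg a = m + n →
    ∃! p : Mor × Mor, deg p.1 = m ∧ deg p.2 = n ∧ src p.1 = rng p.2 ∧
      comp p.1 p.2 = a

namespace KGraph

variable {k : ℕ} (Λ : KGraph k)

/-- The segment `a(m,n)` of a morphism `a`, i.e. the (unique) middle factor of
`a = a(0,m) a(m,n) a(n, d(a))`; junk value `a` if no such factorization exists. -/
noncomputable def seg (a : Λ.Mor) (m n : Fin k → ℕ) : Λ.Mor :=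
  letI := Classical.propDecidable
  if h : ∃ b : Λ.Mor, Λ.deg b = n - m ∧ ∃ x y : Λ.Mor,
      Λ.deg x = m ∧ Λ.src x = Λ.rng b ∧ Λ.src b = Λ.rng y ∧
      a = Λ.comp x (Λ.comp b y)
  then h.choose else a

/-- The points `⨆_{λ ∈ Λ} {λ} × [0, d(λ)]` of which the topological
realization is a quotient; topologized as a disjoint union of subspaces of `ℝᵏ`. -/
def Points : Type :=
  Σ a : Λ.Mor, { t : Fin k → ℝ // ∀ i, 0 ≤ t i ∧ t i ≤ (Λ.deg a i : ℝ) }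

instance : TopologicalSpace Λ.Points :=
  inferInstanceAs (TopologicalSpace
    (Σ a : Λ.Mor, { t : Fin k → ℝ // ∀ i, 0 ≤ t i ∧ t i ≤ (Λ.deg a i : ℝ) }))

/-- Coordinatewise floor `⌊t⌋` (as a vector of naturals; this is the honest
floor on the relevant region `t ≥ 0`). -/
noncomputable def fl (t : Fin k → ℝ) : Fin k → ℕ := fun i => (⌊t i⌋).toNat

/-- Coordinatewise ceiling `⌈t⌉`. -/
noncomputable def ce (t : Fin k → ℝ) : Fin k → ℕ := fun i => (⌈t i⌉).toNat

/-- The fractional part `t - ⌊t⌋`. -/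
noncomputable def frac (t : Fin k → ℝ) : Fin k → ℝ := fun i => t i - ((⌊t i⌋).toNat : ℝ)

/-- The relation `(μ,s) ∼ (ν,t) ⟺ μ(⌊s⌋,⌈s⌉) = ν(⌊t⌋,⌈t⌉)` and
`s - ⌊s⌋ = t - ⌊t⌋` defining the topological realization. -/
def ptRel : Λ.Points → Λ.Points → Prop := fun p q =>
  Λ.seg p.1 (fl p.2.1) (ce p.2.1) = Λ.seg q.1 (fl q.2.1) (ce q.2.1) ∧
    frac p.2.1 = frac q.2.1

/-- `ptRel` is an equivalence relation. -/
def ptSetoid : Setoid Λ.Points where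
  r := Λ.ptRel
  iseqv := ⟨fun _ => ⟨rfl, rfl⟩, fun h => ⟨h.1.symm, h.2.symm⟩,
    fun h h' => ⟨h.1.trans h'.1, h.2.trans h'.2⟩⟩

/-- The topological realization `X_Λ` of the `k`-graph `Λ`. -/
def Real : Type := Quotient Λ.ptSetoid

instance : TopologicalSpace Λ.Real :=
  inferInstanceAs (TopologicalSpace (Quotient Λ.ptSetoid))

/-- The class `[λ, t] ∈ X_Λ` of a pair `(λ, t)` with `0 ≤ t ≤ d(λ)`. -/
def pt (a : Λ.Mor) (t : Fin k → ℝ) (h : ∀ i, 0 ≤ t i ∧ t i ≤ (Λ.deg a i : ℝ)) :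
    Λ.Real :=
  Quotient.mk Λ.ptSetoid ⟨a, ⟨t, h⟩⟩

/-- The open cube `Q_λ = {[λ,t] : t ∈ (0, d(λ))}` of a morphism `λ` (of degree
`≤ (1,…,1)`). -/
def Qcube (lam : Λ.Mor) : Set Λ.Real :=
  { x | ∃ (t : Fin k → ℝ) (h : ∀ i, 0 ≤ t i ∧ t i ≤ (Λ.deg lam i : ℝ)),
      (∀ i, Λ.deg lam i = 1 → 0 < t i ∧ t i < 1) ∧ x = Λ.pt lam t h }

/-- The `r`-skeleton `X_Λ^r` of the topological realization. -/
def skel' (G : KGraph k) : ℕ → Set G.Real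
  | 0 => ⋃ v ∈ { v : G.Mor | G.deg v = 0 }, G.Qcube v
  | (r+1) => skel' G r ∪
      ⋃ lam ∈ { lam : G.Mor | G.deg lam ≤ 1 ∧ ∑ i, G.deg lam i = r + 1 },
        G.Qcube lam

/-- The `r`-skeleton (wrapper). -/
def skel (r : ℕ) : Set Λ.Real := skel' Λ r

/-- A `k`-graph is connected if any two vertices are joined by an undirected
path of morphisms. -/
def Connected : Prop :=
  ∀ u v : Λ.Mor, Λ.deg u = 0 → Λ.deg v = 0 →
    Relation.ReflTransGen (fun x y => ∃ e : Λ.Mor,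
      (Λ.src e = x ∧ Λ.rng e = y) ∨ (Λ.src e = y ∧ Λ.rng e = x)) u v

end KGraph

/-- A morphism of `k`-graphs: a degree-preserving functor. -/
@[ext]
structure KGraphHom {k : ℕ} (Λ Γ : KGraph k) where
  toFun : Λ.Mor → Γ.Mor
  map_src : ∀ a, toFun (Λ.src a) = Γ.src (toFun a)
  map_rng : ∀ a, toFun (Λ.rng a) = Γ.rng (toFun a)
  map_comp : ∀ a b, Λ.src a = Λ.rng b →
    toFun (Λ.comp a b) = Γ.comp (toFun a) (toFun b)
  map_deg : ∀ a, Γ.deg (toFun a) = Λ.deg a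

namespace KGraphHom

variable {k : ℕ} {Λ Γ Θ : KGraph k}

/-- The identity `k`-graph morphism. -/
def id (Λ : KGraph k) : KGraphHom Λ Λ :=
  ⟨fun a => a, fun _ => rfl, fun _ => rfl, fun _ _ _ => rfl, fun _ => rfl⟩

/-- Composition of `k`-graph morphisms. -/
def comp (ψ : KGraphHom Γ Θ) (φ : KGraphHom Λ Γ) : KGraphHom Λ Θ where
  toFun := ψ.toFun ∘ φ.toFun
  map_src a := by simp [Function.comp, φ.map_src, ψ.map_src]
  map_rng a := by simp [Function.comp, φ.map_rng, ψ.map_rng]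
  map_comp a b h := by
    simp only [Function.comp]
    rw [φ.map_comp a b h, ψ.map_comp _ _ (by rw [← φ.map_src, ← φ.map_rng, h])]
  map_deg a := by simp [Function.comp, φ.map_deg, ψ.map_deg]

/-- The induced map on points `(λ, t) ↦ (φ(λ), t)`. -/
def pointMap (φ : KGraphHom Λ Γ) : Λ.Points → Γ.Points :=
  fun p => ⟨φ.toFun p.1, ⟨p.2.1, fun i => by rw [φ.map_deg]; exact p.2.2 i⟩⟩

/-- The induced map `φ̃ : X_Λ → X_Γ` on topological realizations,
`φ̃([λ,t]) = [φ(λ), t]` (defined via choice of representatives). -/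
noncomputable def real (φ : KGraphHom Λ Γ) : Λ.Real → Γ.Real :=
  fun x => Quotient.mk Γ.ptSetoid (φ.pointMap (Quotient.out x))

end KGraphHom

/-- A covering of `k`-graphs: a surjective degree-preserving functor
`p : Ω → Λ` mapping `Ωv` bijectively onto `Λp(v)` and `vΩ` bijectively onto
`p(v)Λ` for every vertex `v` of `Ω`. -/
def KGraphHom.IsCovering {k : ℕ} {Ω Λ : KGraph k} (p : KGraphHom Ω Λ) : Prop :=
  Function.Surjective p.toFun ∧
    ∀ v : Ω.Mor, Ω.deg v = 0 →
      Set.BijOn p.toFun { a | Ω.src a = v } { b | Λ.src b = p.toFun v } ∧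
      Set.BijOn p.toFun { a | Ω.rng a = v } { b | Λ.rng b = p.toFun v }

/-- A `π`-quasimorphism from a `k`-graph `Λ` to an `l`-graph `Γ`, for a monoid
homomorphism `π : ℕᵏ → ℕˡ`: a functor `φ` with `d(φ(λ)) = π(d(λ))`. -/
@[ext]
structure KGraphQHom {k l : ℕ} (Λ : KGraph k) (Γ : KGraph l)
    (π : (Fin k → ℕ) →+ (Fin l → ℕ)) where
  toFun : Λ.Mor → Γ.Mor
  map_src : ∀ a, toFun (Λ.src a) = Γ.src (toFun a)
  map_rng : ∀ a, toFun (Λ.rng a) = Γ.rng (toFun a)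
  map_comp : ∀ a b, Λ.src a = Λ.rng b →
    toFun (Λ.comp a b) = Γ.comp (toFun a) (toFun b)
  map_deg : ∀ a, Γ.deg (toFun a) = π (Λ.deg a)

/-- The linear extension `π̃ : ℝᵏ → ℝˡ` of a homomorphism `π : ℕᵏ → ℕˡ`,
`π̃(t) = ∑ i, t_i π(e_i)`. -/
noncomputable def lext {k l : ℕ} (π : (Fin k → ℕ) →+ (Fin l → ℕ))
    (t : Fin k → ℝ) : Fin l → ℝ :=
  fun j => ∑ i, t i * (π (Pi.single i 1) j : ℝ)

/-- Composition of quasimorphisms: a `π'`-quasimorphism following a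
`π`-quasimorphism is a `π' ∘ π`-quasimorphism. -/
def KGraphQHom.comp {k l h : ℕ} {Λ : KGraph k} {Γ : KGraph l} {Θ : KGraph h}
    {π : (Fin k → ℕ) →+ (Fin l → ℕ)} {π' : (Fin l → ℕ) →+ (Fin h → ℕ)}
    (ψ : KGraphQHom Γ Θ π') (φ : KGraphQHom Λ Γ π) :
    KGraphQHom Λ Θ (π'.comp π) where
  toFun := ψ.toFun ∘ φ.toFun
  map_src a := by simp [Function.comp, φ.map_src, ψ.map_src]
  map_rng a := by simp [Function.comp, φ.map_rng, ψ.map_rng]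
  map_comp a b hab := by
    simp only [Function.comp]
    rw [φ.map_comp a b hab, ψ.map_comp _ _ (by rw [← φ.map_src, ← φ.map_rng, hab])]
  map_deg a := by simp [Function.comp, φ.map_deg, ψ.map_deg]

/-!
Unique factorization gives `[x b y, d(x) + t] = [b, t]` in `X_Λ` whenever `0 ≤ t ≤ d(b)`.
Apply this in `Γ` to `φ(λ) = φ(λ(0,⌊t⌋)) φ(λ(⌊t⌋,⌈t⌉)) φ(λ(⌈t⌉,d(λ)))`: as `π̃` is additive and
restricts to `π` on `ℕᵏ`, `[φ(λ), π̃(t)] = [φ(λ(⌊t⌋,⌈t⌉)), π̃(t - ⌊t⌋)]`, which depends only on the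
class of `(λ, t)`. So `φ̃` is well defined, and it is continuous as the quotient of the continuous
map `(λ, t) ↦ (φ(λ), π̃(t))` on the disjoint union. It is unique because the points `[λ, t]`
exhaust `X_Λ`, and `(φ' ∘ φ)~ = φ̃' ∘ φ̃` because `(π' ∘ π)~ = π̃' ∘ π̃`.
-/

namespace KGraph

variable {k : ℕ} (Λ : KGraph k)

theorem comp_inj {x c x' c' : Λ.Mor} (hx : Λ.deg x = Λ.deg x')
    (hxc : Λ.src x = Λ.rng c) (hxc' : Λ.src x' = Λ.rng c')
    (h : Λ.comp x c = Λ.comp x' c') : x = x' ∧ c = c' := by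
  have hc : Λ.deg c = Λ.deg c' := add_left_cancel (a := Λ.deg x) <| by
    rw [← Λ.deg_comp x c hxc, h, Λ.deg_comp x' c' hxc', hx]
  obtain ⟨p, -, hp⟩ := Λ.factor (Λ.comp x c) (Λ.deg x) (Λ.deg c) (Λ.deg_comp x c hxc)
  exact Prod.ext_iff.mp <|
    (hp (x, c) ⟨rfl, rfl, hxc, rfl⟩).trans (hp (x', c') ⟨hx.symm, hc.symm, hxc', h.symm⟩).symm

variable {Λ}

theorem seg_eq_of_eq_comp {a b x y : Λ.Mor} {m n : Fin k → ℕ}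
    (hx : Λ.deg x = m) (hb : Λ.deg b = n - m)
    (hxb : Λ.src x = Λ.rng b) (hby : Λ.src b = Λ.rng y)
    (ha : a = Λ.comp x (Λ.comp b y)) : Λ.seg a m n = b := by
  have hex : ∃ b : Λ.Mor, Λ.deg b = n - m ∧ ∃ x y : Λ.Mor,
      Λ.deg x = m ∧ Λ.src x = Λ.rng b ∧ Λ.src b = Λ.rng y ∧
      a = Λ.comp x (Λ.comp b y) := ⟨b, hb, x, y, hx, hxb, hby, ha⟩
  rw [seg, dif_pos hex]
  obtain ⟨hc, x', y', hx', hx'c, hcy', ha'⟩ := hex.choose_spec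
  have hbc := (Λ.comp_inj (hx.trans hx'.symm) (by rwa [Λ.rng_comp b y hby])
    (by rwa [Λ.rng_comp _ y' hcy']) (ha.symm.trans ha')).2
  exact (Λ.comp_inj (hc.trans hb.symm) hcy' hby hbc.symm).1

theorem seg_spec {a : Λ.Mor} {m n : Fin k → ℕ} (hmn : m ≤ n) (hn : n ≤ Λ.deg a) :
    Λ.deg (Λ.seg a m n) = n - m ∧ ∃ x y : Λ.Mor,
      Λ.deg x = m ∧ Λ.src x = Λ.rng (Λ.seg a m n) ∧ Λ.src (Λ.seg a m n) = Λ.rng y ∧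
      a = Λ.comp x (Λ.comp (Λ.seg a m n) y) := by
  obtain ⟨⟨x, r⟩, ⟨hx, hr, hxr, ha⟩, -⟩ :=
    Λ.factor a m (Λ.deg a - m) (add_tsub_cancel_of_le (hmn.trans hn)).symm
  obtain ⟨⟨b, y⟩, ⟨hb, -, hby, hr'⟩, -⟩ := Λ.factor r (n - m) (Λ.deg a - n) <| by
    rw [hr, add_comm, tsub_add_tsub_cancel hn hmn]
  have hxb : Λ.src x = Λ.rng b := by rw [hxr, ← hr', Λ.rng_comp b y hby]
  have ha' : a = Λ.comp x (Λ.comp b y) := by rw [hr', ha]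
  rw [seg_eq_of_eq_comp hx hb hxb hby ha']
  exact ⟨hb, x, y, hx, hxb, hby, ha'⟩

theorem seg_comp_comp {x b y : Λ.Mor} (hxb : Λ.src x = Λ.rng b) (hby : Λ.src b = Λ.rng y)
    {p q : Fin k → ℕ} (hpq : p ≤ q) (hq : q ≤ Λ.deg b) :
    Λ.seg (Λ.comp x (Λ.comp b y)) (Λ.deg x + p) (Λ.deg x + q) = Λ.seg b p q := by
  obtain ⟨hc, x', y', hx', hx'c, hcy', hb⟩ := seg_spec hpq hq
  set c := Λ.seg b p q
  have hxx' : Λ.src x = Λ.rng x' := by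
    rw [hxb, hb, Λ.rng_comp x' _ (by rwa [Λ.rng_comp c y' hcy'])]
  have hy'y : Λ.src y' = Λ.rng y := by
    rw [← hby, hb, Λ.src_comp x' _ (by rwa [Λ.rng_comp c y' hcy']), Λ.src_comp c y' hcy']
  refine seg_eq_of_eq_comp (x := Λ.comp x x') (y := Λ.comp y' y) ?_ ?_ ?_ ?_ ?_
  · rw [Λ.deg_comp x x' hxx', hx']
  · rw [hc, add_tsub_add_eq_tsub_left]
  · rwa [Λ.src_comp x x' hxx']
  · rwa [Λ.rng_comp y' y hy'y]
  · have hx'cy' : Λ.src x' = Λ.rng (Λ.comp c y') := by rwa [Λ.rng_comp c y' hcy']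
    rw [hb, Λ.comp_assoc x' _ y hx'cy' (by rwa [Λ.src_comp c y' hcy']),
      Λ.comp_assoc c y' y hcy' hy'y,
      Λ.comp_assoc x x' _ hxx' (by rwa [Λ.rng_comp c _ (by rwa [Λ.rng_comp y' y hy'y])])]

theorem fl_le_ce (t : Fin k → ℝ) : fl t ≤ ce t := fun _ =>
  Int.toNat_le_toNat (Int.floor_le_ceil _)

theorem ce_le_of_le {t : Fin k → ℝ} {n : Fin k → ℕ} (h : ∀ i, t i ≤ n i) : ce t ≤ n := fun i =>
  Int.toNat_le.mpr (Int.ceil_le.mpr (by exact_mod_cast h i))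

theorem frac_nonneg {t : Fin k → ℝ} (ht : ∀ i, 0 ≤ t i) (i : Fin k) : 0 ≤ frac t i := by
  rw [frac, Int.floor_toNat, natCast_floor_eq_intCast_floor (ht i), sub_nonneg]
  exact Int.floor_le _

theorem frac_le_ce_sub_fl {t : Fin k → ℝ} (ht : ∀ i, 0 ≤ t i) (i : Fin k) :
    frac t i ≤ ((ce t - fl t) i : ℝ) := by
  rw [frac, Pi.sub_apply, Nat.cast_sub (fl_le_ce t i), fl, ce, Int.floor_toNat,
    Int.ceil_toNat, natCast_floor_eq_intCast_floor (ht i), natCast_ceil_eq_intCast_ceil (ht i)]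
  linarith [Int.le_ceil (t i)]

theorem natCast_fl_add_frac (t : Fin k → ℝ) : (fun i => (fl t i : ℝ) + frac t i) = t := by
  funext i
  exact add_sub_cancel _ _

theorem fl_natCast_add {n : Fin k → ℕ} {t : Fin k → ℝ} (ht : ∀ i, 0 ≤ t i) :
    fl (fun i => (n i : ℝ) + t i) = n + fl t := by
  funext i
  simp only [fl, Pi.add_apply, add_comm (n i : ℝ), Int.floor_add_natCast]
  have := Int.floor_nonneg.mpr (ht i)
  omega

theorem ce_natCast_add {n : Fin k → ℕ} {t : Fin k → ℝ} (ht : ∀ i, 0 ≤ t i) :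
    ce (fun i => (n i : ℝ) + t i) = n + ce t := by
  funext i
  simp only [ce, Pi.add_apply, add_comm (n i : ℝ), Int.ceil_add_natCast]
  have := Int.ceil_nonneg (ht i)
  omega

theorem frac_natCast_add {n : Fin k → ℕ} {t : Fin k → ℝ} (ht : ∀ i, 0 ≤ t i) :
    frac (fun i => (n i : ℝ) + t i) = frac t := by
  funext i
  have := congrFun (fl_natCast_add (n := n) ht) i
  simp only [fl, Pi.add_apply] at this
  simp only [frac, this]
  push_cast
  ring

theorem frac_mem_seg {a : Λ.Mor} {t : Fin k → ℝ} (ht : ∀ i, 0 ≤ t i ∧ t i ≤ (Λ.deg a i : ℝ))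
    (i : Fin k) :
    0 ≤ frac t i ∧ frac t i ≤ (Λ.deg (Λ.seg a (fl t) (ce t)) i : ℝ) := by
  have ht0 i : 0 ≤ t i := (ht i).1
  rw [(seg_spec (fl_le_ce t) (ce_le_of_le fun i => (ht i).2)).1]
  exact ⟨frac_nonneg ht0 i, frac_le_ce_sub_fl ht0 i⟩

theorem pt_congr {a b : Λ.Mor} {s t : Fin k → ℝ} (hab : a = b) (hst : s = t)
    (hs : ∀ i, 0 ≤ s i ∧ s i ≤ (Λ.deg a i : ℝ)) (ht : ∀ i, 0 ≤ t i ∧ t i ≤ (Λ.deg b i : ℝ)) :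
    Λ.pt a s hs = Λ.pt b t ht := by
  subst hab hst
  rfl

theorem pt_eq_pt_of_eq_comp {a x b y : Λ.Mor} (ha : a = Λ.comp x (Λ.comp b y))
    (hxb : Λ.src x = Λ.rng b) (hby : Λ.src b = Λ.rng y) {s t : Fin k → ℝ}
    (hst : s = fun i => (Λ.deg x i : ℝ) + t i)
    (hs : ∀ i, 0 ≤ s i ∧ s i ≤ (Λ.deg a i : ℝ)) (ht : ∀ i, 0 ≤ t i ∧ t i ≤ (Λ.deg b i : ℝ)) :
    Λ.pt a s hs = Λ.pt b t ht := by
  subst ha hst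
  have ht0 i : 0 ≤ t i := (ht i).1
  refine Quotient.sound ⟨?_, frac_natCast_add ht0⟩
  change Λ.seg _ (fl _) (ce _) = Λ.seg b (fl t) (ce t)
  rw [fl_natCast_add ht0, ce_natCast_add ht0]
  exact seg_comp_comp hxb hby (fl_le_ce t) (ce_le_of_le fun i => (ht i).2)

end KGraph

section LinearExtension

variable {k l : ℕ} (π : (Fin k → ℕ) →+ (Fin l → ℕ))

theorem AddMonoidHom.apply_eq_sum_single (m : Fin k → ℕ) (j : Fin l) :
    π m j = ∑ i, m i * π (Pi.single i 1) j := by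
  conv_lhs => rw [← Finset.univ_sum_single m]
  simp only [map_sum, Finset.sum_apply]
  refine Finset.sum_congr rfl fun i _ => ?_
  rw [← smul_eq_mul, ← Pi.smul_apply, ← map_nsmul, ← Pi.single_smul, smul_eq_mul, mul_one]

theorem lext_natCast (n : Fin k → ℕ) : lext π (fun i => (n i : ℝ)) = fun j => (π n j : ℝ) := by
  funext j
  simp [lext, π.apply_eq_sum_single n j]

theorem lext_natCast_add (n : Fin k → ℕ) (t : Fin k → ℝ) :
    lext π (fun i => (n i : ℝ) + t i) = fun j => (π n j : ℝ) + lext π t j := by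
  funext j
  rw [← congrFun (lext_natCast π n) j]
  simp only [lext, add_mul, Finset.sum_add_distrib]

theorem lext_mem_Icc {t : Fin k → ℝ} {n : Fin k → ℕ} (ht : ∀ i, 0 ≤ t i ∧ t i ≤ (n i : ℝ))
    (j : Fin l) : 0 ≤ lext π t j ∧ lext π t j ≤ (π n j : ℝ) := by
  rw [← congrFun (lext_natCast π n) j]
  exact ⟨Finset.sum_nonneg fun i _ => mul_nonneg (ht i).1 (Nat.cast_nonneg _),
    Finset.sum_le_sum fun i _ => mul_le_mul_of_nonneg_right (ht i).2 (Nat.cast_nonneg _)⟩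

theorem lext_comp {h : ℕ} (π' : (Fin l → ℕ) →+ (Fin h → ℕ)) (t : Fin k → ℝ) :
    lext (π'.comp π) t = lext π' (lext π t) := by
  funext j
  simp only [lext, AddMonoidHom.comp_apply, π'.apply_eq_sum_single (π _) j, Finset.sum_mul,
    Finset.mul_sum, Nat.cast_sum, Nat.cast_mul]
  rw [Finset.sum_comm]
  exact Finset.sum_congr rfl fun _ _ => Finset.sum_congr rfl fun _ _ => by ring

theorem continuous_lext : Continuous (lext π) := by
  unfold lext
  fun_prop

end LinearExtension

namespace KGraphQHom

open KGraph

variable {k l : ℕ} {Λ : KGraph k} {Γ : KGraph l} {π : (Fin k → ℕ) →+ (Fin l → ℕ)}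
  (φ : KGraphQHom Λ Γ π)

theorem lext_mem {a : Λ.Mor} {t : Fin k → ℝ} (ht : ∀ i, 0 ≤ t i ∧ t i ≤ (Λ.deg a i : ℝ))
    (j : Fin l) : 0 ≤ lext π t j ∧ lext π t j ≤ (Γ.deg (φ.toFun a) j : ℝ) := by
  rw [φ.map_deg]
  exact lext_mem_Icc π ht j

theorem pt_lext_eq_pt_seg (a : Λ.Mor) {t : Fin k → ℝ}
    (ht : ∀ i, 0 ≤ t i ∧ t i ≤ (Λ.deg a i : ℝ)) :
    Γ.pt (φ.toFun a) (lext π t) (φ.lext_mem ht) =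
      Γ.pt (φ.toFun (Λ.seg a (fl t) (ce t))) (lext π (frac t)) (φ.lext_mem (frac_mem_seg ht)) := by
  obtain ⟨-, x, y, hx, hxb, hby, ha⟩ := seg_spec (fl_le_ce t) (ce_le_of_le fun i => (ht i).2)
  refine Γ.pt_eq_pt_of_eq_comp ?_ (by rw [← φ.map_src, ← φ.map_rng, hxb])
    (by rw [← φ.map_src, ← φ.map_rng, hby]) ?_ _ _
  · conv_lhs => rw [ha]
    rw [φ.map_comp x _ (by rwa [Λ.rng_comp _ y hby]), φ.map_comp _ y hby]
  · conv_lhs => rw [← natCast_fl_add_frac t]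
    rw [lext_natCast_add, φ.map_deg, hx]

noncomputable def pointMap : Λ.Points → Γ.Points :=
  fun p => ⟨φ.toFun p.1, ⟨lext π p.2.1, φ.lext_mem p.2.2⟩⟩

theorem continuous_pointMap : Continuous φ.pointMap :=
  continuous_sigma fun _ => Continuous.comp (g := Sigma.mk (φ.toFun _)) continuous_sigmaMk <|
    ((continuous_lext π).comp continuous_subtype_val).subtype_mk _

noncomputable def realMap : C(Λ.Real, Γ.Real) where
  toFun := Quotient.lift (fun p => Quotient.mk _ (φ.pointMap p)) fun ⟨a, s, hs⟩ ⟨b, t, ht⟩ hst =>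
    calc Γ.pt (φ.toFun a) (lext π s) _
        = Γ.pt (φ.toFun (Λ.seg a (fl s) (ce s))) (lext π (frac s)) _ := φ.pt_lext_eq_pt_seg a hs
      _ = Γ.pt (φ.toFun (Λ.seg b (fl t) (ce t))) (lext π (frac t)) _ :=
          Γ.pt_congr (congrArg φ.toFun hst.1) (congrArg (lext π) hst.2) _ _
      _ = Γ.pt (φ.toFun b) (lext π t) _ := (φ.pt_lext_eq_pt_seg b ht).symm
  continuous_toFun := (continuous_quot_mk.comp φ.continuous_pointMap).quotient_lift _

theorem realMap_pt (a : Λ.Mor) (t : Fin k → ℝ) (ht : ∀ i, 0 ≤ t i ∧ t i ≤ (Λ.deg a i : ℝ)) :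
    φ.realMap (Λ.pt a t ht) = Γ.pt (φ.toFun a) (lext π t) (φ.lext_mem ht) :=
  rfl

end KGraphQHom

/-- A `π`-quasimorphism `φ : Λ → Γ` induces a (unique)
well-defined continuous map `φ̃ : X_Λ → X_Γ` with `φ̃([λ,t]) = [φ(λ), π̃(t)]`;
moreover `φ' ∘ φ` is a `π' ∘ π`-quasimorphism (this is `KGraphQHom.comp`) and
`(φ' ∘ φ)~ = φ̃' ∘ φ̃`. -/
theorem quasimorphism_induces_continuous_map
    {k l h : ℕ} (Λ : KGraph k) (Γ : KGraph l) (Θ : KGraph h)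
    (π : (Fin k → ℕ) →+ (Fin l → ℕ)) (π' : (Fin l → ℕ) →+ (Fin h → ℕ))
    (φ : KGraphQHom Λ Γ π) (φ' : KGraphQHom Γ Θ π') :
    (∃! F : C(Λ.Real, Γ.Real),
      ∀ (a : Λ.Mor) (t : Fin k → ℝ)
        (hb : ∀ i, 0 ≤ t i ∧ t i ≤ (Λ.deg a i : ℝ))
        (hb' : ∀ j, 0 ≤ lext π t j ∧ lext π t j ≤ (Γ.deg (φ.toFun a) j : ℝ)),
        F (Λ.pt a t hb) = Γ.pt (φ.toFun a) (lext π t) hb') ∧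
    (∀ (F : C(Λ.Real, Γ.Real)) (F' : C(Γ.Real, Θ.Real)) (F'' : C(Λ.Real, Θ.Real)),
      (∀ (a : Λ.Mor) (t : Fin k → ℝ)
        (hb : ∀ i, 0 ≤ t i ∧ t i ≤ (Λ.deg a i : ℝ))
        (hb' : ∀ j, 0 ≤ lext π t j ∧ lext π t j ≤ (Γ.deg (φ.toFun a) j : ℝ)),
        F (Λ.pt a t hb) = Γ.pt (φ.toFun a) (lext π t) hb') →
      (∀ (b : Γ.Mor) (t : Fin l → ℝ)
        (hb : ∀ j, 0 ≤ t j ∧ t j ≤ (Γ.deg b j : ℝ))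
        (hb' : ∀ j, 0 ≤ lext π' t j ∧ lext π' t j ≤ (Θ.deg (φ'.toFun b) j : ℝ)),
        F' (Γ.pt b t hb) = Θ.pt (φ'.toFun b) (lext π' t) hb') →
      (∀ (a : Λ.Mor) (t : Fin k → ℝ)
        (hb : ∀ i, 0 ≤ t i ∧ t i ≤ (Λ.deg a i : ℝ))
        (hb' : ∀ j, 0 ≤ lext (π'.comp π) t j ∧
          lext (π'.comp π) t j ≤ (Θ.deg ((φ'.comp φ).toFun a) j : ℝ)),
        F'' (Λ.pt a t hb) = Θ.pt ((φ'.comp φ).toFun a) (lext (π'.comp π) t) hb') →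
      ∀ x : Λ.Real, F'' x = F' (F x)) := by
  refine ⟨⟨φ.realMap, fun a t hb _ => φ.realMap_pt a t hb, fun F hF => ?_⟩,
    fun F F' F'' hF hF' hF'' x => ?_⟩
  · ext x
    induction x using Quotient.ind with
    | _ p => exact hF p.1 p.2.1 p.2.2 (φ.lext_mem p.2.2)
  · induction x using Quotient.ind with
    | _ p =>
      obtain ⟨a, t, ht⟩ := p
      change F'' (Λ.pt a t ht) = F' (F (Λ.pt a t ht))
      rw [hF'' a t ht ((φ'.comp φ).lext_mem ht), hF a t ht (φ.lext_mem ht),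
        hF' _ _ _ (φ'.lext_mem (φ.lext_mem ht))]
      exact Θ.pt_congr rfl (lext_comp π π' t) _ _
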